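/- arXiv:1712.00864 — 2 statements merged into one kernel-verified Lean document; each statement's English description precedes it below -/
import Mathlib

section
/- Let a be a positive integer. Then D(1/a) ≤_S IOE(n ↦ 2^(a^n)) and AED(n ↦ 2^(a^n)) ≤_S B(1/a) (Medvedev reducibilities). -/
/-!
Cut `ℕ` into consecutive blocks `[Sₙ, Sₙ + aⁿ)` with `Sₙ = ∑_{k<n} aᵏ`, and read a number below
`2^(aⁿ)` as the bit string on the `n`-th block. Since `a * Sₙ ≤ Sₙ₊₁`, two bit sequences that
disagree on the whole `n`-th block agree on at most a fraction `1/a` of `[0, Sₙ₊₁)`; disagreeing on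
infinitely many whole blocks therefore forces the lower density of agreement down to `1/a`.

For `D(1/a) ≤ IOE`, flip the bits that `g ∈ IOE` writes on the blocks: `g` hits the block code of
each computable bit sequence `x` infinitely often, and there the flipped sequence disagrees with `x`
on the whole block. For `AED ≤ B(1/a)`, send `y` to the block codes of its flip: a computable
function hitting these infinitely often decodes to a computable bit sequence that disagrees with
`y` on infinitely many whole blocks, which `y ∈ B(1/a)` forbids.
-/

open Filter

namespace Paper

/-! ### Oracle computability -/

/-- Codes for oracle Turing functionals (partial recursive operators with one
function oracle), following the pattern of `Nat.Partrec.Code`. -/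
inductive OracleCode : Type
  | zero
  | succ
  | left
  | right
  | oracle
  | pair : OracleCode → OracleCode → OracleCode
  | comp : OracleCode → OracleCode → OracleCode
  | prec : OracleCode → OracleCode → OracleCode
  | rfind' : OracleCode → OracleCode

/-- Evaluation of an oracle code with oracle `g : ℕ → ℕ`. -/
def OracleCode.eval (g : ℕ → ℕ) : OracleCode → ℕ →. ℕ
  | .zero => pure 0
  | .succ => Nat.succ
  | .left => ↑fun n : ℕ => n.unpair.1
  | .right => ↑fun n : ℕ => n.unpair.2
  | .oracle => ↑fun n : ℕ => g n
  | .pair cf cg => fun n => Nat.pair <$> eval g cf n <*> eval g cg n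
  | .comp cf cg => fun n => eval g cg n >>= eval g cf
  | .prec cf cg =>
    Nat.unpaired fun a n =>
      n.rec (eval g cf a) fun y IH => do
        let i ← IH
        eval g cg (Nat.pair a (Nat.pair y i))
  | .rfind' cf =>
    Nat.unpaired fun a m =>
      (Nat.rfind fun n => (fun m => m = 0) <$> eval g cf (Nat.pair a (n + m))).map (· + m)

/-- Turing reducibility: `f ≤_T g` iff some oracle functional with oracle `g`
computes `f` (totally). -/
def TuringLE (f g : ℕ → ℕ) : Prop :=
  ∃ c : OracleCode, ∀ n, OracleCode.eval g c n = Part.some (f n)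

/-- Turing equivalence. -/
def TuringEquiv (f g : ℕ → ℕ) : Prop := TuringLE f g ∧ TuringLE g f

/-- A mass problem is a set of functions `ℕ → ℕ`. -/
abbrev MassProblem := Set (ℕ → ℕ)

/-- Muchnik (weak) reducibility `B ≤_W C`. -/
def MuchnikLE (B C : MassProblem) : Prop := ∀ g ∈ C, ∃ f ∈ B, TuringLE f g

/-- Muchnik equivalence. -/
def MuchnikEquiv (B C : MassProblem) : Prop := MuchnikLE B C ∧ MuchnikLE C B

/-- Medvedev (strong) reducibility `B ≤_S C`: a single Turing functional is
defined on all of `C` and maps each member of `C` to a member of `B`. -/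
def MedvedevLE (B C : MassProblem) : Prop :=
  ∃ c : OracleCode, ∀ g ∈ C, ∃ f ∈ B, ∀ n, OracleCode.eval g c n = Part.some (f n)

/-- Medvedev equivalence. -/
def MedvedevEquiv (B C : MassProblem) : Prop := MedvedevLE B C ∧ MedvedevLE C B

/-! ### Density notions -/

/-- Lower (asymptotic) density of a set of naturals. -/
noncomputable def lowerDensity (z : Set ℕ) : ℝ :=
  Filter.liminf (fun n => (Nat.card ↥(z ∩ Set.Iio n) : ℝ) / n) Filter.atTop

/-- `x ↔ y`: the agreement set of two functions. -/
def agree (x y : ℕ → ℕ) : Set ℕ := {n | x n = y n}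

/-- A bit sequence is a `{0,1}`-valued function. -/
def IsBitSeq (x : ℕ → ℕ) : Prop := ∀ n, x n < 2

/-- The mass problem `D(p)`. -/
def probD (p : ℝ) : MassProblem :=
  {y | IsBitSeq y ∧ ∀ x : ℕ → ℕ, IsBitSeq x → Computable x →
    lowerDensity (agree x y) ≤ p}

/-- The mass problem `B(p)`. -/
def probB (p : ℝ) : MassProblem :=
  {y | IsBitSeq y ∧ ∀ x : ℕ → ℕ, IsBitSeq x → Computable x →
    p < lowerDensity (agree x y)}

/-- The mass problem `IOE(h)`. -/
def IOE (h : ℕ → ℕ) : MassProblem :=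
  {f | ∀ x : ℕ → ℕ, Computable x → (∀ n, x n < h n) → ∃ᶠ n in atTop, f n = x n}

/-- The mass problem `AED(h)`. -/
def AED (h : ℕ → ℕ) : MassProblem :=
  {f | (∀ n, f n < h n) ∧ ∀ x : ℕ → ℕ, Computable x → ∀ᶠ n in atTop, f n ≠ x n}

/-! ### Hamming distance and the problems `D⟨≠*,ĥ,q⟩`, `B⟨≠*,ĥ,q⟩` -/

/-- Normalized Hamming distance between `a` and `b`, viewed as binary strings
of length `r` (via binary expansion with leading zeros). -/
noncomputable def nhd (r a b : ℕ) : ℝ :=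
  (((Finset.range r).filter fun i => a.testBit i ≠ b.testBit i).card : ℝ) / r

/-- The mass problem `D⟨≠*, ĥ, q⟩`. -/
def probDneq (hh : ℕ → ℕ) (q : ℝ) : MassProblem :=
  {y | (∀ n, y n < 2 ^ hh n) ∧ ∀ x : ℕ → ℕ, Computable x → (∀ n, x n < 2 ^ hh n) →
    ∃ᶠ n in atTop, nhd (hh n) (x n) (y n) < q}

/-- The mass problem `B⟨≠*, ĥ, q⟩`. -/
def probBneq (hh : ℕ → ℕ) (q : ℝ) : MassProblem :=
  {y | (∀ n, y n < 2 ^ hh n) ∧ ∀ x : ℕ → ℕ, Computable x → (∀ n, x n < 2 ^ hh n) →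
    ∀ᶠ n in atTop, q ≤ nhd (hh n) (x n) (y n)}

/-! ### Slaloms, coded as functions `ℕ → ℕ` via binary digits -/

/-- `s : ℕ → ℕ`, coding finite sets via binary digits (`i ∈ s(n)` iff the
`i`-th bit of `s n` is set), is an `L`-slalom bounded by `u`. -/
def IsSlalomCode (u : ℕ → ℕ) (L : ℕ) (s : ℕ → ℕ) : Prop :=
  ∀ n, (∀ i, (s n).testBit i = true → i < u n) ∧
    ((Finset.range (u n)).filter fun i => (s n).testBit i = true).card ≤ L

/-- The mass problem `D⟨∌*, u, L⟩`. -/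
def probDSlalom (u : ℕ → ℕ) (L : ℕ) : MassProblem :=
  {s | IsSlalomCode u L s ∧ ∀ y : ℕ → ℕ, Computable y → (∀ n, y n < u n) →
    ∃ᶠ n in atTop, (s n).testBit (y n) = true}

/-- The mass problem `B⟨∌*, u, L⟩`. -/
def probBSlalom (u : ℕ → ℕ) (L : ℕ) : MassProblem :=
  {y | (∀ n, y n < u n) ∧ ∀ s : ℕ → ℕ, Computable s → IsSlalomCode u L s →
    ∀ᶠ n in atTop, (s n).testBit (y n) = false}

/-! ### Gamma and Delta values -/

/-- `γ(A)`. -/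
noncomputable def gammaVal (A : ℕ → ℕ) : ℝ :=
  sSup ((fun x => lowerDensity (agree A x)) '' {x | IsBitSeq x ∧ Computable x})

/-- `Γ(A)`. -/
noncomputable def GammaVal (A : ℕ → ℕ) : ℝ :=
  sInf (gammaVal '' {Y | IsBitSeq Y ∧ TuringEquiv Y A})

/-- `δ(A)`. -/
noncomputable def deltaVal (A : ℕ → ℕ) : ℝ :=
  sInf ((fun x => lowerDensity (agree A x)) '' {x | IsBitSeq x ∧ Computable x})

/-- `Δ(A)`. -/
noncomputable def DeltaVal (A : ℕ → ℕ) : ℝ :=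
  sSup (deltaVal '' {Y | IsBitSeq Y ∧ TuringLE Y A})

/-! ### Cardinal characteristics -/

/-- The cardinal characteristic `𝔡(p)`. -/
noncomputable def dChar (p : ℝ) : Cardinal :=
  sInf {c : Cardinal | ∃ G : Set (ℕ → ℕ), c = Cardinal.mk G ∧ (∀ y ∈ G, IsBitSeq y) ∧
    ∀ x : ℕ → ℕ, IsBitSeq x → ∃ y ∈ G, p < lowerDensity (agree x y)}

/-- The cardinal characteristic `𝔟(p)`. -/
noncomputable def bChar (p : ℝ) : Cardinal :=
  sInf {c : Cardinal | ∃ F : Set (ℕ → ℕ), c = Cardinal.mk F ∧ (∀ x ∈ F, IsBitSeq x) ∧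
    ∀ y : ℕ → ℕ, IsBitSeq y → ∃ x ∈ F, lowerDensity (agree x y) ≤ p}

/-- The cardinal characteristic `𝔡(≠*, h)`. -/
noncomputable def dNeq (h : ℕ → ℕ) : Cardinal :=
  sInf {c : Cardinal | ∃ G : Set (ℕ → ℕ), c = Cardinal.mk G ∧ (∀ y ∈ G, ∀ n, y n < h n) ∧
    ∀ x : ℕ → ℕ, ∃ y ∈ G, ∀ᶠ n in atTop, x n ≠ y n}

/-- The cardinal characteristic `𝔟(≠*, h)`. -/
noncomputable def bNeq (h : ℕ → ℕ) : Cardinal :=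
  sInf {c : Cardinal | ∃ F : Set (ℕ → ℕ), c = Cardinal.mk F ∧
    ∀ y : ℕ → ℕ, (∀ n, y n < h n) → ∃ x ∈ F, ∃ᶠ n in atTop, x n = y n}

/-- The cardinal characteristic `𝔡⟨≠*, ĥ, q⟩`. -/
noncomputable def dHam (hh : ℕ → ℕ) (q : ℝ) : Cardinal :=
  sInf {c : Cardinal | ∃ G : Set (ℕ → ℕ), c = Cardinal.mk G ∧
    (∀ y ∈ G, ∀ n, y n < 2 ^ hh n) ∧
    ∀ x : ℕ → ℕ, (∀ n, x n < 2 ^ hh n) →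
      ∃ y ∈ G, ∀ᶠ n in atTop, q ≤ nhd (hh n) (x n) (y n)}

/-- The cardinal characteristic `𝔟⟨≠*, ĥ, q⟩`. -/
noncomputable def bHam (hh : ℕ → ℕ) (q : ℝ) : Cardinal :=
  sInf {c : Cardinal | ∃ F : Set (ℕ → ℕ), c = Cardinal.mk F ∧
    (∀ x ∈ F, ∀ n, x n < 2 ^ hh n) ∧
    ∀ y : ℕ → ℕ, (∀ n, y n < 2 ^ hh n) →
      ∃ x ∈ F, ∃ᶠ n in atTop, nhd (hh n) (x n) (y n) < q}

/-- `s : ℕ → Finset ℕ` is an `L`-slalom bounded by `u`. -/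
def IsSlalom (u : ℕ → ℕ) (L : ℕ) (s : ℕ → Finset ℕ) : Prop :=
  ∀ n, (∀ i ∈ s n, i < u n) ∧ (s n).card ≤ L

/-- The cardinal characteristic `𝔡⟨∌*, u, L⟩`. -/
noncomputable def dSlalom (u : ℕ → ℕ) (L : ℕ) : Cardinal :=
  sInf {c : Cardinal | ∃ G : Set (ℕ → ℕ), c = Cardinal.mk G ∧ (∀ y ∈ G, ∀ n, y n < u n) ∧
    ∀ s : ℕ → Finset ℕ, IsSlalom u L s → ∃ y ∈ G, ∀ᶠ n in atTop, y n ∉ s n}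

/-- The cardinal characteristic `𝔟⟨∌*, u, L⟩`. -/
noncomputable def bSlalom (u : ℕ → ℕ) (L : ℕ) : Cardinal :=
  sInf {c : Cardinal | ∃ F : Set (ℕ → Finset ℕ), c = Cardinal.mk F ∧
    (∀ s ∈ F, IsSlalom u L s) ∧
    ∀ y : ℕ → ℕ, (∀ n, y n < u n) → ∃ s ∈ F, ∃ᶠ n in atTop, y n ∈ s n}

/-! ### Order functions and list decoding -/

/-- An order function: nondecreasing, unbounded and computable. -/
def IsOrderFunc (F : ℕ → ℕ) : Prop :=
  Computable F ∧ Monotone F ∧ ∀ b : ℕ, ∃ n, b < F n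

/-- The list-decoding property for parameters `q`, `ε`, `L`: for every length `r`
there is a set `C` of `2^⌊εr⌋` binary strings of length `r` (coded as numbers
below `2^r`) such that every string has at most `L` elements of `C` within
normalized Hamming distance `< q`. -/
def ListDecoding (q ε : ℝ) (L : ℕ) : Prop :=
  ∀ r : ℕ, ∃ C : Finset ℕ, (∀ a ∈ C, a < 2 ^ r) ∧ C.card = 2 ^ ⌊ε * r⌋₊ ∧
    ∀ σ < 2 ^ r, (C.filter fun τ => nhd r σ τ < q).card ≤ L

namespace OracleCode

def ofCode : Nat.Partrec.Code → OracleCode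
  | .zero => .zero
  | .succ => .succ
  | .left => .left
  | .right => .right
  | .pair cf cg => .pair (ofCode cf) (ofCode cg)
  | .comp cf cg => .comp (ofCode cf) (ofCode cg)
  | .prec cf cg => .prec (ofCode cf) (ofCode cg)
  | .rfind' cf => .rfind' (ofCode cf)

theorem eval_ofCode (g : ℕ → ℕ) : ∀ c : Nat.Partrec.Code, eval g (ofCode c) = c.eval
  | .zero | .succ | .left | .right => rfl
  | .pair cf cg | .comp cf cg | .prec cf cg => by
      simp only [ofCode, eval, Nat.Partrec.Code.eval, eval_ofCode g cf, eval_ofCode g cg]; rfl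
  | .rfind' cf => by
      simp only [ofCode, eval, Nat.Partrec.Code.eval, eval_ofCode g cf]; rfl

theorem partrec_eval {g : ℕ → ℕ} (hg : Computable g) : ∀ c : OracleCode, Nat.Partrec (eval g c)
  | .zero => Nat.Partrec.zero
  | .succ => Nat.Partrec.succ
  | .left => Nat.Partrec.left
  | .right => Nat.Partrec.right
  | .oracle => Partrec.nat_iff.1 hg.partrec
  | .pair cf cg => (partrec_eval hg cf).pair (partrec_eval hg cg)
  | .comp cf cg => (partrec_eval hg cf).comp (partrec_eval hg cg)
  | .prec cf cg => (partrec_eval hg cf).prec (partrec_eval hg cg)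
  | .rfind' cf => (partrec_eval hg cf).rfind'

end OracleCode

def IsTuringFunctional (T : (ℕ → ℕ) → ℕ → ℕ) : Prop :=
  ∃ c : OracleCode, ∀ g n, OracleCode.eval g c n = Part.some (T g n)

namespace IsTuringFunctional

variable {T U : (ℕ → ℕ) → ℕ → ℕ}

theorem of_eq (hT : IsTuringFunctional T) (h : ∀ g n, T g n = U g n) :
    IsTuringFunctional U := by
  obtain ⟨c, hc⟩ := hT
  exact ⟨c, fun g n => by rw [hc, h]⟩

theorem const {f : ℕ → ℕ} (hf : Computable f) : IsTuringFunctional fun _ => f := by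
  obtain ⟨c, hc⟩ := Nat.Partrec.Code.exists_code.1 (Partrec.nat_iff.1 hf.partrec)
  exact ⟨.ofCode c, fun g n => by rw [OracleCode.eval_ofCode, hc]; rfl⟩

theorem oracle : IsTuringFunctional fun g => g := ⟨.oracle, fun _ _ => rfl⟩

theorem comp (hT : IsTuringFunctional T) (hU : IsTuringFunctional U) :
    IsTuringFunctional fun g n => T g (U g n) := by
  obtain ⟨cT, hcT⟩ := hT
  obtain ⟨cU, hcU⟩ := hU
  refine ⟨.comp cT cU, fun g n => ?_⟩
  change OracleCode.eval g cU n >>= OracleCode.eval g cT = _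
  rw [hcU]
  exact (Part.bind_some _ _).trans (hcT g _)

theorem pair (hT : IsTuringFunctional T) (hU : IsTuringFunctional U) :
    IsTuringFunctional fun g n => Nat.pair (T g n) (U g n) := by
  obtain ⟨cT, hcT⟩ := hT
  obtain ⟨cU, hcU⟩ := hU
  refine ⟨.pair cT cU, fun g n => ?_⟩
  change Nat.pair <$> OracleCode.eval g cT n <*> OracleCode.eval g cU n = _
  simp [hcT, hcU, Seq.seq]

theorem comp₂ {f : ℕ → ℕ → ℕ} (hf : Computable₂ f) (hT : IsTuringFunctional T)
    (hU : IsTuringFunctional U) : IsTuringFunctional fun g n => f (T g n) (U g n) := by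
  have hf' : Computable fun p : ℕ => f p.unpair.1 p.unpair.2 :=
    hf.comp (Computable.fst.comp Computable.unpair) (Computable.snd.comp Computable.unpair)
  exact ((const hf').comp (hT.pair hU)).of_eq fun g n => by simp

theorem prec {U : (ℕ → ℕ) → ℕ → ℕ → ℕ → ℕ} (hT : IsTuringFunctional T)
    (hU : IsTuringFunctional fun g p => U g p.unpair.1 p.unpair.2.unpair.1 p.unpair.2.unpair.2) :
    IsTuringFunctional fun g p =>
      Nat.rec (motive := fun _ => ℕ) (T g p.unpair.1) (fun k ih => U g p.unpair.1 k ih)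
        p.unpair.2 := by
  obtain ⟨cT, hcT⟩ := hT
  obtain ⟨cU, hcU⟩ := hU
  refine ⟨.prec cT cU, fun g p => ?_⟩
  suffices ∀ n k, (Nat.rec (OracleCode.eval g cT n)
      (fun y IH => IH.bind fun i => OracleCode.eval g cU (Nat.pair n (Nat.pair y i))) k :
        Part ℕ) = Part.some (Nat.rec (motive := fun _ => ℕ) (T g n) (fun k ih => U g n k ih) k)
    from this p.unpair.1 p.unpair.2
  intro n k
  induction k with
  | zero => exact hcT g n
  | succ k ih =>
    change Part.bind (Nat.rec _ _ k) _ = _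
    rw [ih, Part.bind_some, hcU]
    simp

theorem sum_range {F : (ℕ → ℕ) → ℕ → ℕ → ℕ}
    (hF : IsTuringFunctional fun g p => F g p.unpair.1 p.unpair.2) {B : ℕ → ℕ}
    (hB : Computable B) :
    IsTuringFunctional fun g n => ∑ j ∈ Finset.range (B n), F g n j := by
  have hfst : Primrec fun p : ℕ => p.unpair.1 := Primrec.fst.comp Primrec.unpair
  have hsnd : Primrec fun p : ℕ => p.unpair.2 := Primrec.snd.comp Primrec.unpair
  have hstep : IsTuringFunctional fun g p =>
      p.unpair.2.unpair.2 + F g p.unpair.1 p.unpair.2.unpair.1 :=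
    (comp₂ Primrec.nat_add.to_comp (const (hsnd.comp hsnd).to_comp)
      (hF.comp (const (Primrec₂.natPair.comp hfst (hfst.comp hsnd)).to_comp))).of_eq
      fun g p => by simp
  refine ((prec (U := fun g n k ih => ih + F g n k) (const (f := fun _ => 0) (Computable.const 0))
    hstep).comp (const (f := fun n => Nat.pair n (B n)) (Computable.id.pair hB))).of_eq
    fun g n => ?_
  simp only [Nat.unpair_pair]
  induction B n with
  | zero => rfl
  | succ k ih => rw [Finset.sum_range_succ, ← ih]

theorem computable (hT : IsTuringFunctional T) {g : ℕ → ℕ} (hg : Computable g) :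
    Computable (T g) := by
  obtain ⟨c, hc⟩ := hT
  exact Partrec.nat_iff.2 ((OracleCode.partrec_eval hg c).of_eq fun n => hc g n)

theorem medvedevLE {B C : MassProblem} (hT : IsTuringFunctional T) (h : ∀ g ∈ C, T g ∈ B) :
    MedvedevLE B C := by
  obtain ⟨c, hc⟩ := hT
  exact ⟨c, fun g hg => ⟨T g, h g hg, hc g⟩⟩

end IsTuringFunctional

theorem primrec_pow_left (a : ℕ) : Primrec fun n : ℕ => a ^ n :=
  (Primrec₂.unpaired'.1 Nat.Primrec.pow).comp (Primrec.const a) Primrec.id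

theorem sum_bits_mul_two_pow_lt {c : ℕ → ℕ} (hc : ∀ i, c i < 2) (L : ℕ) :
    ∑ i ∈ Finset.range L, c i * 2 ^ i < 2 ^ L := by
  induction L with
  | zero => simp
  | succ L ih =>
    rw [Finset.sum_range_succ, pow_succ]
    have : c L * 2 ^ L ≤ 1 * 2 ^ L := Nat.mul_le_mul_right _ (Nat.le_of_lt_succ (hc L))
    omega

theorem sum_range_succ_mul_two_pow (c : ℕ → ℕ) (L : ℕ) :
    ∑ i ∈ Finset.range (L + 1), c i * 2 ^ i =
      2 * ∑ i ∈ Finset.range L, c (i + 1) * 2 ^ i + c 0 := by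
  rw [Finset.sum_range_succ', Finset.mul_sum]
  simp only [pow_succ, pow_zero, mul_one]
  congr 1
  exact Finset.sum_congr rfl fun i _ => by ring

theorem sum_bits_mul_two_pow_div_mod {c : ℕ → ℕ} (hc : ∀ i, c i < 2) {L j : ℕ} (hj : j < L) :
    (∑ i ∈ Finset.range L, c i * 2 ^ i) / 2 ^ j % 2 = c j := by
  obtain ⟨L, rfl⟩ : ∃ L', L = L' + 1 := ⟨L - 1, by omega⟩
  rw [sum_range_succ_mul_two_pow]
  induction j generalizing c L with
  | zero => have := hc 0; simp; omega
  | succ j ih =>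
    obtain ⟨L, rfl⟩ : ∃ L', L = L' + 1 := ⟨L - 1, by omega⟩
    rw [pow_succ', ← Nat.div_div_eq_div_mul, Nat.mul_add_div two_pos, Nat.div_eq_of_lt (hc 0),
      add_zero, sum_range_succ_mul_two_pow]
    exact ih (fun i => hc (i + 1)) L (by omega)

section Blocks

variable (a : ℕ)

def blockStart : ℕ → ℕ
  | 0 => 0
  | n + 1 => blockStart n + a ^ n

def blockIdx : ℕ → ℕ
  | 0 => 0
  | m + 1 => if blockStart a (blockIdx m + 1) ≤ m + 1 then blockIdx m + 1 else blockIdx m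

theorem primrec_blockStart : Primrec (blockStart a) := by
  refine (Primrec.nat_rec₁ 0 (Primrec.nat_add.comp Primrec.snd
    ((primrec_pow_left a).comp Primrec.fst)).to₂).of_eq fun n => ?_
  induction n with
  | zero => rfl
  | succ n ih => simp [blockStart, ih]

theorem primrec_blockIdx : Primrec (blockIdx a) := by
  have hle : PrimrecPred fun p : ℕ × ℕ => blockStart a (p.2 + 1) ≤ p.1 + 1 :=
    Primrec.nat_le.comp ((primrec_blockStart a).comp (Primrec.succ.comp Primrec.snd))
      (Primrec.succ.comp Primrec.fst)
  refine (Primrec.nat_rec₁ 0 (Primrec.ite hle (Primrec.succ.comp Primrec.snd)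
    Primrec.snd).to₂).of_eq fun m => ?_
  induction m with
  | zero => rfl
  | succ m ih => simp only [blockIdx, ← ih]

theorem mul_blockStart_le (n : ℕ) : a * blockStart a n ≤ blockStart a (n + 1) := by
  induction n with
  | zero => simp [blockStart]
  | succ n ih =>
    simp only [blockStart, pow_succ] at ih ⊢
    nlinarith

variable {a}

theorem blockStart_strictMono (ha : 0 < a) : StrictMono (blockStart a) :=
  strictMono_nat_of_lt_succ fun n => Nat.lt_add_of_pos_right (pow_pos ha n)

theorem blockIdx_spec (ha : 0 < a) (m : ℕ) :
    blockStart a (blockIdx a m) ≤ m ∧ m < blockStart a (blockIdx a m + 1) := by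
  induction m with
  | zero => exact ⟨le_rfl, blockStart_strictMono ha Nat.zero_lt_one⟩
  | succ m ih =>
    simp only [blockIdx]
    split_ifs with h
    · have := blockStart_strictMono ha (by omega : blockIdx a m + 1 < blockIdx a m + 1 + 1)
      exact ⟨h, by omega⟩
    · omega

theorem blockIdx_blockStart_add (ha : 0 < a) {n j : ℕ} (hj : j < a ^ n) :
    blockIdx a (blockStart a n + j) = n := by
  obtain ⟨h₁, h₂⟩ := blockIdx_spec ha (blockStart a n + j)
  have h₃ : blockStart a n + j < blockStart a (n + 1) := by simp [blockStart, hj]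
  have h₄ := (blockStart_strictMono ha).lt_iff_lt.1 (h₁.trans_lt h₃)
  have h₅ := (blockStart_strictMono ha).lt_iff_lt.1 ((Nat.le_add_right _ j).trans_lt h₂)
  omega

end Blocks

def blockEnc (a : ℕ) (x : ℕ → ℕ) (n : ℕ) : ℕ :=
  ∑ j ∈ Finset.range (a ^ n), x (blockStart a n + j) * 2 ^ j

def blockDec (a : ℕ) (g : ℕ → ℕ) (m : ℕ) : ℕ :=
  g (blockIdx a m) / 2 ^ (m - blockStart a (blockIdx a m)) % 2

theorem blockEnc_lt {a : ℕ} {x : ℕ → ℕ} (hx : IsBitSeq x) (n : ℕ) :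
    blockEnc a x n < 2 ^ a ^ n :=
  sum_bits_mul_two_pow_lt (fun _ => hx _) _

theorem isBitSeq_blockDec (a : ℕ) (g : ℕ → ℕ) : IsBitSeq (blockDec a g) :=
  fun _ => Nat.mod_lt _ two_pos

theorem blockDec_blockStart_add {a : ℕ} (ha : 0 < a) {x g : ℕ → ℕ} (hx : IsBitSeq x) {n j : ℕ}
    (hg : g n = blockEnc a x n) (hj : j < a ^ n) :
    blockDec a g (blockStart a n + j) = x (blockStart a n + j) := by
  rw [blockDec, blockIdx_blockStart_add ha hj, Nat.add_sub_cancel_left, hg]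
  exact sum_bits_mul_two_pow_div_mod (fun _ => hx _) hj

theorem isTuringFunctional_blockEnc (a : ℕ) {G : ℕ → ℕ} (hG : Computable G) :
    IsTuringFunctional fun g => blockEnc a fun m => G (g m) := by
  have hfst : Primrec fun p : ℕ => p.unpair.1 := Primrec.fst.comp Primrec.unpair
  have hsnd : Primrec fun p : ℕ => p.unpair.2 := Primrec.snd.comp Primrec.unpair
  have hbit : IsTuringFunctional fun g p => G (g (blockStart a p.unpair.1 + p.unpair.2)) :=
    (IsTuringFunctional.const hG).comp (IsTuringFunctional.oracle.comp (.const
      (Primrec.nat_add.comp ((primrec_blockStart a).comp hfst) hsnd).to_comp))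
  have hterm : IsTuringFunctional fun g p =>
      G (g (blockStart a p.unpair.1 + p.unpair.2)) * 2 ^ p.unpair.2 :=
    .comp₂ Primrec.nat_mul.to_comp hbit (.const ((primrec_pow_left 2).comp hsnd).to_comp)
  exact hterm.sum_range (primrec_pow_left a).to_comp

theorem isTuringFunctional_blockDec (a : ℕ) : IsTuringFunctional (blockDec a) := by
  have hexp : Primrec fun m => 2 ^ (m - blockStart a (blockIdx a m)) :=
    (primrec_pow_left 2).comp (Primrec.nat_sub.comp Primrec.id
      ((primrec_blockStart a).comp (primrec_blockIdx a)))
  have hquot : IsTuringFunctional fun g m =>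
      g (blockIdx a m) / 2 ^ (m - blockStart a (blockIdx a m)) :=
    .comp₂ Primrec.nat_div.to_comp
      (IsTuringFunctional.oracle.comp (.const (primrec_blockIdx a).to_comp)) (.const hexp.to_comp)
  exact .comp₂ Primrec.nat_mod.to_comp hquot (.const (Computable.const 2))

theorem lowerDensity_le_of_frequently {z : Set ℕ} {p : ℝ}
    (h : ∃ᶠ N in atTop, (Nat.card ↥(z ∩ Set.Iio N) : ℝ) / N ≤ p) : lowerDensity z ≤ p :=
  liminf_le_of_frequently_le h (isBoundedUnder_of ⟨0, fun _ => by positivity⟩)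

theorem card_agree_Iio_blockStart_succ_le {a : ℕ} {x y : ℕ → ℕ} {n : ℕ}
    (h : ∀ j < a ^ n, x (blockStart a n + j) ≠ y (blockStart a n + j)) :
    Nat.card ↥(agree x y ∩ Set.Iio (blockStart a (n + 1))) ≤ blockStart a n := by
  have hsub : agree x y ∩ Set.Iio (blockStart a (n + 1)) ⊆ Set.Iio (blockStart a n) := by
    rintro m ⟨hagree, hm⟩
    by_contra hge
    simp only [Set.mem_Iio, not_lt, blockStart] at hm hge
    refine h (m - blockStart a n) (by omega) ?_
    rwa [Nat.add_sub_cancel' hge]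
  calc Nat.card ↥(agree x y ∩ Set.Iio (blockStart a (n + 1)))
      ≤ Nat.card ↥(Set.Iio (blockStart a n)) := Nat.card_mono (Set.finite_Iio _) hsub
    _ = blockStart a n := by rw [Nat.card_coe_set_eq, Set.ncard_Iio_nat]

theorem lowerDensity_agree_le_of_frequently_disagree_on_block {a : ℕ} (ha : 0 < a)
    {x y : ℕ → ℕ}
    (h : ∃ᶠ n in atTop, ∀ j < a ^ n, x (blockStart a n + j) ≠ y (blockStart a n + j)) :
    lowerDensity (agree x y) ≤ 1 / a := by
  refine lowerDensity_le_of_frequently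
    (((blockStart_strictMono ha).comp fun _ _ => Nat.succ_lt_succ).tendsto_atTop.frequently
      (h.mono fun n hn => ?_))
  have hpos : (0 : ℝ) < blockStart a (n + 1) := by
    exact_mod_cast (Nat.zero_le _).trans_lt (blockStart_strictMono ha n.lt_succ_self)
  rw [Function.comp_apply, div_le_div_iff₀ hpos (by exact_mod_cast ha), one_mul]
  calc (Nat.card ↥(agree x y ∩ Set.Iio (blockStart a (n + 1))) : ℝ) * a
      ≤ blockStart a n * a := by gcongr; exact_mod_cast card_agree_Iio_blockStart_succ_le hn
    _ ≤ blockStart a (n + 1) := by exact_mod_cast (mul_comm _ a ▸ mul_blockStart_le a n)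

/-- For a positive integer `a`: `D(1/a) ≤_S IOE(n ↦ 2^(a^n))` and
`AED(n ↦ 2^(a^n)) ≤_S B(1/a)`. -/
theorem stmt9 (a : ℕ) (ha : 0 < a) :
    MedvedevLE (probD (1 / (a : ℝ))) (IOE fun n => 2 ^ a ^ n) ∧
      MedvedevLE (AED fun n => 2 ^ a ^ n) (probB (1 / (a : ℝ))) := by
  have hflip : Computable fun t : ℕ => 1 - t :=
    (Primrec.nat_sub.comp (Primrec.const 1) Primrec.id).to_comp
  constructor
  · refine ((IsTuringFunctional.const hflip).comp (isTuringFunctional_blockDec a)).medvedevLE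
      fun g hg => ⟨fun _ => Nat.sub_lt_succ _ _, fun x hx hxc => ?_⟩
    have hfreq := hg (blockEnc a x) ((isTuringFunctional_blockEnc a Computable.id).computable hxc)
      (blockEnc_lt hx)
    refine lowerDensity_agree_le_of_frequently_disagree_on_block ha (hfreq.mono fun n hn j hj => ?_)
    rw [blockDec_blockStart_add ha hx hn hj]
    have := hx (blockStart a n + j)
    omega
  · refine (isTuringFunctional_blockEnc a hflip).medvedevLE fun y ⟨hy, hyB⟩ =>
      ⟨blockEnc_lt fun _ => Nat.sub_lt_succ _ _, fun x hxc => ?_⟩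
    by_contra hne
    have hfreq : ∃ᶠ n in atTop, x n = blockEnc a (fun m => 1 - y m) n :=
      (not_eventually.1 hne).mono fun n hn => (not_not.1 hn).symm
    refine (hyB _ (isBitSeq_blockDec a x) ((isTuringFunctional_blockDec a).computable hxc)).not_ge
      (lowerDensity_agree_le_of_frequently_disagree_on_block ha (hfreq.mono fun n hn j hj => ?_))
    rw [blockDec_blockStart_add ha (fun _ => Nat.sub_lt_succ _ _) hn hj]
    have := hy (blockStart a n + j)
    omega

end Paper
end

section
/- Let h: ℕ→ℕ be nondecreasing and let g(n) = h(2n). Then 𝔡(≠*, h) = 𝔡(≠*, g) and 𝔟(≠*, h) = 𝔟(≠*, g). -/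
open Filter

namespace Paper

/-!
Since `h n ≤ h (2 * n)`, every `h`-bounded function is `g`-bounded; this gives
`𝔡(≠*, g) ≤ 𝔡(≠*, h)` and `𝔟(≠*, h) ≤ 𝔟(≠*, g)`. Conversely, a `≠*`-dominating family `G`
for `g` gives one for `h` by interleaving pairs `a, b ∈ G` (`a k` at `2k`, `b k` at `2k + 1`,
which is allowed as `h (2k) ≤ h (2k + 1)`); such a `G` is uncountable, so `|G × G| = |G|`.
A `≠*`-unbounded family `F` for `h` gives one for `g` by restricting its members to the even
and to the odd positions: some `x ∈ F` agrees infinitely often with `n ↦ y (n / 2)`, hence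
along one parity class. When `F` is finite this doubling is too costly, but then `h` is
bounded by `|F|`, and the `|F|` constant functions below `|F|` suffice by pigeonhole.
-/

open Cardinal

theorem sInf_mk_le_sInf_mk {α : Type*} {P Q : Set α → Prop}
    (hQP : ∀ G, Q G → ∃ G', P G' ∧ #G' ≤ #G) (hPQ : ∀ G, P G → ∃ G', Q G') :
    sInf {c | ∃ G : Set α, c = #G ∧ P G} ≤ sInf {c | ∃ G : Set α, c = #G ∧ Q G} := by
  rcases Set.eq_empty_or_nonempty {c | ∃ G : Set α, c = #G ∧ Q G} with hQ | hQ
  · have hP : {c | ∃ G : Set α, c = #G ∧ P G} = ∅ := by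
      refine Set.eq_empty_of_forall_notMem fun c ⟨G, _, hG⟩ => ?_
      obtain ⟨G', hG'⟩ := hPQ G hG
      have hmem : #G' ∈ {c | ∃ G : Set α, c = #G ∧ Q G} := ⟨G', rfl, hG'⟩
      simp [hQ] at hmem
    rw [hP, hQ]
  · obtain ⟨G, hc, hG⟩ := csInf_mem hQ
    obtain ⟨G', hG', hle⟩ := hQP G hG
    have hmem : #G' ∈ {c | ∃ G : Set α, c = #G ∧ P G} := ⟨G', rfl, hG'⟩
    exact (csInf_le' hmem).trans (hc ▸ hle)

theorem sInf_mk_eq_sInf_mk {α : Type*} {P Q : Set α → Prop}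
    (hPQ : ∀ G, P G → ∃ G', Q G' ∧ #G' ≤ #G) (hQP : ∀ G, Q G → ∃ G', P G' ∧ #G' ≤ #G) :
    sInf {c | ∃ G : Set α, c = #G ∧ P G} = sInf {c | ∃ G : Set α, c = #G ∧ Q G} :=
  le_antisymm (sInf_mk_le_sInf_mk hQP fun G hG => (hPQ G hG).imp fun _ => And.left)
    (sInf_mk_le_sInf_mk hPQ fun G hG => (hQP G hG).imp fun _ => And.left)

theorem eventually_atTop_of_two_mul_of_two_mul_add_one {p : ℕ → Prop}
    (h₀ : ∀ᶠ k in atTop, p (2 * k)) (h₁ : ∀ᶠ k in atTop, p (2 * k + 1)) :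
    ∀ᶠ n in atTop, p n := by
  have hdiv := Nat.tendsto_div_const_atTop (n := 2) two_ne_zero
  filter_upwards [hdiv.eventually h₀, hdiv.eventually h₁] with n hn₀ hn₁
  rcases Nat.even_or_odd n with hn | hn
  · rwa [Nat.two_mul_div_two_of_even hn] at hn₀
  · rwa [Nat.two_mul_div_two_add_one_of_odd hn] at hn₁

theorem frequently_two_mul_or_two_mul_add_one {p : ℕ → Prop} (h : ∃ᶠ n in atTop, p n) :
    (∃ᶠ k in atTop, p (2 * k)) ∨ ∃ᶠ k in atTop, p (2 * k + 1) := by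
  by_contra! hc
  exact h (eventually_atTop_of_two_mul_of_two_mul_add_one hc.1 hc.2)

/-- Enumerate the family along the rows of `Nat.pair`. -/
theorem exists_frequently_eq_of_countable {G : Set (ℕ → ℕ)} (hG : G.Countable) :
    ∃ x : ℕ → ℕ, ∀ y ∈ G, ∃ᶠ n in atTop, x n = y n := by
  rcases G.eq_empty_or_nonempty with rfl | hne
  · exact ⟨0, by simp⟩
  obtain ⟨e, rfl⟩ := hG.exists_eq_range hne
  refine ⟨fun n => e n.unpair.1 n, ?_⟩
  rintro _ ⟨i, rfl⟩
  exact frequently_atTop.2 fun N => ⟨Nat.pair i N, Nat.right_le_pair i N, by simp⟩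

def interleave (a b : ℕ → ℕ) (n : ℕ) : ℕ :=
  if Even n then a (n / 2) else b (n / 2)

@[simp]
theorem interleave_two_mul (a b : ℕ → ℕ) (k : ℕ) : interleave a b (2 * k) = a k := by
  simp [interleave]

@[simp]
theorem interleave_two_mul_add_one (a b : ℕ → ℕ) (k : ℕ) :
    interleave a b (2 * k + 1) = b k := by
  simp [interleave, Nat.add_div_of_dvd_right]

def IsNeqDominating (h : ℕ → ℕ) (G : Set (ℕ → ℕ)) : Prop :=
  (∀ y ∈ G, ∀ n, y n < h n) ∧ ∀ x : ℕ → ℕ, ∃ y ∈ G, ∀ᶠ n in atTop, x n ≠ y n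

def IsNeqUnbounded (h : ℕ → ℕ) (F : Set (ℕ → ℕ)) : Prop :=
  ∀ y : ℕ → ℕ, (∀ n, y n < h n) → ∃ x ∈ F, ∃ᶠ n in atTop, x n = y n

theorem dNeq_eq (h : ℕ → ℕ) :
    dNeq h = sInf {c | ∃ G : Set (ℕ → ℕ), c = #G ∧ IsNeqDominating h G} :=
  rfl

theorem bNeq_eq (h : ℕ → ℕ) :
    bNeq h = sInf {c | ∃ F : Set (ℕ → ℕ), c = #F ∧ IsNeqUnbounded h F} :=
  rfl

namespace IsNeqDominating

variable {h h' : ℕ → ℕ} {G : Set (ℕ → ℕ)}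

theorem mono (hG : IsNeqDominating h G) (hle : ∀ n, h n ≤ h' n) : IsNeqDominating h' G :=
  ⟨fun y hy n => (hG.1 y hy n).trans_le (hle n), hG.2⟩

theorem aleph0_lt_mk (hG : IsNeqDominating h G) : ℵ₀ < #G := by
  refine lt_of_not_ge fun hle => ?_
  obtain ⟨x, hx⟩ := exists_frequently_eq_of_countable (le_aleph0_iff_set_countable.1 hle)
  obtain ⟨y, hy, hne⟩ := hG.2 x
  obtain ⟨n, heq, hne⟩ := ((hx y hy).and_eventually hne).exists
  exact hne heq

theorem image2_interleave (hm : Monotone h) (hG : IsNeqDominating (fun n => h (2 * n)) G) :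
    IsNeqDominating h (Set.image2 interleave G G) := by
  refine ⟨?_, fun x => ?_⟩
  · rintro _ ⟨a, ha, b, hb, rfl⟩ n
    obtain ⟨k, rfl | rfl⟩ := Nat.even_or_odd' n
    · simpa using hG.1 a ha k
    · simpa using (hG.1 b hb k).trans_le (hm (Nat.le_succ _))
  obtain ⟨a, ha, hxa⟩ := hG.2 fun k => x (2 * k)
  obtain ⟨b, hb, hxb⟩ := hG.2 fun k => x (2 * k + 1)
  exact ⟨interleave a b, Set.mem_image2_of_mem ha hb,
    eventually_atTop_of_two_mul_of_two_mul_add_one (by simpa using hxa) (by simpa using hxb)⟩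

theorem exists_of_two_mul (hm : Monotone h) (hG : IsNeqDominating (fun n => h (2 * n)) G) :
    ∃ G', IsNeqDominating h G' ∧ #G' ≤ #G :=
  ⟨_, hG.image2_interleave hm, mk_image2_le.trans (mul_eq_self hG.aleph0_lt_mk.le).le⟩

end IsNeqDominating

theorem isNeqUnbounded_empty_of_eq_zero {h : ℕ → ℕ} {n : ℕ} (hn : h n = 0) :
    IsNeqUnbounded h ∅ :=
  fun y hy => absurd (hy n) (by omega)

theorem isNeqUnbounded_range_const {h : ℕ → ℕ} {k : ℕ} (hk : ∀ n, h n ≤ k) :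
    IsNeqUnbounded h (Set.range fun i : Fin k => fun _ => (i : ℕ)) := by
  intro y hy
  obtain ⟨i, hi⟩ :=
    Finite.exists_infinite_fiber fun n => (⟨y n, (hy n).trans_le (hk n)⟩ : Fin k)
  refine ⟨_, ⟨i, rfl⟩, Nat.frequently_atTop_iff_infinite.2 ?_⟩
  convert Set.infinite_coe_iff.1 hi using 1
  ext n
  simp [Fin.ext_iff, eq_comm]

namespace IsNeqUnbounded

variable {h h' : ℕ → ℕ} {F : Set (ℕ → ℕ)}

theorem mono (hF : IsNeqUnbounded h' F) (hle : ∀ n, h n ≤ h' n) : IsNeqUnbounded h F :=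
  fun y hy => hF y fun n => (hy n).trans_le (hle n)

/-- Where `h n` exceeds the size of the family, `y n` can avoid every `x n`; by monotonicity
this happens at all large `n`. -/
theorem le_card {s : Finset (ℕ → ℕ)} (hm : Monotone h) (hpos : ∀ n, 0 < h n)
    (hs : IsNeqUnbounded h s) (n : ℕ) : h n ≤ s.card := by
  by_contra! hn
  have hmiss : ∀ m, ∃ v < h m, s.card < h m → ∀ x ∈ s, x m ≠ v := by
    intro m
    by_cases hlt : s.card < h m
    · obtain ⟨v, hv, hvs⟩ := Finset.exists_mem_notMem_of_card_lt_card
        (s := s.image fun x => x m) (t := Finset.range (h m))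
        (by simpa using Finset.card_image_le.trans_lt hlt)
      exact ⟨v, Finset.mem_range.1 hv,
        fun _ x hx hxv => hvs (Finset.mem_image.2 ⟨x, hx, hxv⟩)⟩
    · exact ⟨0, hpos m, fun h' => absurd h' hlt⟩
  choose y hy hys using hmiss
  obtain ⟨x, hx, hfreq⟩ := hs y hy
  obtain ⟨m, hnm, hxy⟩ := frequently_atTop.1 hfreq n
  exact hys m (hn.trans_le (hm hnm)) x hx hxy

theorem even_union_odd (hm : Monotone h) (hF : IsNeqUnbounded h F) :
    IsNeqUnbounded (fun n => h (2 * n))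
      ((fun x k => x (2 * k)) '' F ∪ (fun x k => x (2 * k + 1)) '' F) := by
  intro y hy
  obtain ⟨x, hx, hfreq⟩ :=
    hF (fun n => y (n / 2)) fun n => (hy _).trans_le (hm (by omega))
  rcases frequently_two_mul_or_two_mul_add_one hfreq with hfreq | hfreq
  · exact ⟨_, Or.inl ⟨x, hx, rfl⟩, by simpa using hfreq⟩
  · exact ⟨_, Or.inr ⟨x, hx, rfl⟩, by simpa [Nat.add_div_of_dvd_right] using hfreq⟩

theorem exists_two_mul (hm : Monotone h) (hF : IsNeqUnbounded h F) :
    ∃ F', IsNeqUnbounded (fun n => h (2 * n)) F' ∧ #F' ≤ #F := by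
  by_cases h₀ : h 0 = 0
  · exact ⟨∅, isNeqUnbounded_empty_of_eq_zero (n := 0) (by simpa using h₀), by simp⟩
  have hpos : ∀ n, 0 < h n := fun n => (Nat.pos_of_ne_zero h₀).trans_le (hm n.zero_le)
  rcases F.finite_or_infinite with hfin | hinf
  · obtain ⟨s, rfl⟩ := hfin.exists_finset_coe
    exact ⟨_, isNeqUnbounded_range_const fun n => hF.le_card hm hpos (2 * n),
      mk_range_le.trans (by simp)⟩
  · have hinf : ℵ₀ ≤ #F := Cardinal.infinite_iff.1 hinf.to_subtype
    refine ⟨_, hF.even_union_odd hm, (mk_union_le _ _).trans ?_⟩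
    exact (add_le_add mk_image_le mk_image_le).trans (add_eq_self hinf).le

end IsNeqUnbounded

/-- For nondecreasing `h` and `g(n) = h(2n)`:
`𝔡(≠*, h) = 𝔡(≠*, g)` and `𝔟(≠*, h) = 𝔟(≠*, g)`. -/
theorem stmt14 (h : ℕ → ℕ) (hm : Monotone h) :
    dNeq h = dNeq (fun n => h (2 * n)) ∧ bNeq h = bNeq (fun n => h (2 * n)) := by
  have hle : ∀ n, h n ≤ h (2 * n) := fun n => hm (by omega)
  rw [dNeq_eq, dNeq_eq, bNeq_eq, bNeq_eq]
  exact ⟨sInf_mk_eq_sInf_mk (fun G hG => ⟨G, hG.mono hle, le_rfl⟩)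
      (fun G hG => hG.exists_of_two_mul hm),
    sInf_mk_eq_sInf_mk (fun F hF => hF.exists_two_mul hm)
      (fun F hF => ⟨F, hF.mono hle, le_rfl⟩)⟩

end Paper
end
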